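/- arXiv:1809.03093 — 4 statements merged into one kernel-verified Lean document; each statement's English description precedes it below -/
import Mathlib

section
/- Let m, k : ℕ with k ≥ 2, let f : (Fin m → Bool) → (Fin m → Bool) be monotone, and let w : Fin m → Bool satisfy f^k(w) = w with w, f(w), …, f^{k-1}(w) pairwise distinct. Then for all i, j < k with i ≠ j, the points f^i(w) and f^j(w) are incomparable: neither f^i(w) ≤ f^j(w) nor f^j(w) ≤ f^i(w). -/
/-- If a point below its image under a monotone map returns to itself after
`k` iterations, it is a fixed point. -/
lemma fix_of_le_of_periodic {α : Type*} [PartialOrder α] (g : α → α)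
    (hg : Monotone g) (x : α) (h : x ≤ g x) (k : ℕ) (hk : 0 < k)
    (hfix : g^[k] x = x) : g x = x := by
  have chain : ∀ n, x ≤ g^[n] x := by
    intro n
    induction n with
    | zero => simp
    | succ n ih =>
      calc x ≤ g x := h
        _ ≤ g (g^[n] x) := hg ih
        _ = g^[n + 1] x := (Function.iterate_succ_apply' g n x).symm
  have h1 : g x ≤ x := by
    calc g x ≤ g (g^[k - 1] x) := hg (chain (k - 1))
      _ = g^[k - 1 + 1] x := (Function.iterate_succ_apply' g (k - 1) x).symm
      _ = x := by rw [Nat.sub_add_cancel hk, hfix]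
  exact le_antisymm h1 h

/-- The points of a simple cycle of a monotone self-map of the boolean cube
form an antichain. -/
theorem cycle_points_incomparable (m k : ℕ) (hk : 2 ≤ k)
    (f : (Fin m → Bool) → (Fin m → Bool)) (hf : Monotone f)
    (w : Fin m → Bool) (hcyc : f^[k] w = w)
    (hdist : ∀ i j : ℕ, i < j → j < k → f^[i] w ≠ f^[j] w) :
    ∀ i j : ℕ, i < k → j < k → i ≠ j →
      ¬ f^[i] w ≤ f^[j] w ∧ ¬ f^[j] w ≤ f^[i] w := by
  suffices H : ∀ i j : ℕ, i < k → j < k → i ≠ j → ¬ f^[i] w ≤ f^[j] w by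
    intro i j hi hj hij
    exact ⟨H i j hi hj hij, H j i hj hi hij.symm⟩
  intro i j hi hj hij hle
  have hper : ∀ n, f^[n + k] w = f^[n] w := by
    intro n
    rw [Function.iterate_add_apply, hcyc]
  set d : ℕ := if i < j then j - i else j + k - i with hd
  have hd0 : 0 < d := by
    rcases lt_or_gt_of_ne hij with h' | h'
    · simp [hd, if_pos h']; omega
    · have : ¬ i < j := by omega
      simp [hd, if_neg this]; omega
  have hdk : d < k := by
    rcases lt_or_gt_of_ne hij with h' | h'
    · simp [hd, if_pos h']; omega
    · have : ¬ i < j := by omega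
      simp [hd, if_neg this]; omega
  have hstep : f^[d] (f^[i] w) = f^[j] w := by
    rw [← Function.iterate_add_apply]
    rcases lt_or_gt_of_ne hij with h' | h'
    · have : d + i = j := by simp [hd, if_pos h']; omega
      rw [this]
    · have hni : ¬ i < j := by omega
      have : d + i = j + k := by simp [hd, if_neg hni]; omega
      rw [this, hper]
  -- x ≤ g x for g = f^[d], x = f^[i] w
  have hgle : f^[i] w ≤ (f^[d]) (f^[i] w) := by rw [hstep]; exact hle
  have hgfix : (f^[d])^[k] (f^[i] w) = f^[i] w := by
    have hw : f^[d * k] w = w := by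
      rw [Nat.mul_comm, Function.iterate_mul]
      exact Function.iterate_fixed hcyc d
    rw [← Function.iterate_mul, ← Function.iterate_add_apply, Nat.add_comm,
      Function.iterate_add_apply, hw]
  have := fix_of_le_of_periodic (f^[d]) (hf.iterate d) (f^[i] w) hgle k
    (by omega) hgfix
  rw [hstep] at this
  rcases lt_or_gt_of_ne hij with h' | h'
  · exact hdist i j h' hj this.symm
  · exact hdist j i h' hi this
end

section
/- Let m, k : ℕ, let f : (Fin m → Bool) → (Fin m → Bool) be monotone, and let w : Fin m → Bool satisfy f^k(w) = w with the iterates w, f(w), …, f^{k-1}(w) pairwise distinct. Then k ≤ Nat.choose m (m / 2), i.e., the length of any simple cycle of a monotone self-map of the boolean cube {0,1}^m is at most the binomial coefficient C(m, ⌊m/2⌋). -/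
/-!
A monotone map cannot move a point of one of its cycles strictly upwards: if `x ≤ g x` then
the orbit of `x` under `g` is increasing, and returning to `x` squeezes it back down. Applied
to the iterates of `f`, this makes any two points of a cycle incomparable, so a cycle of `f` is
an antichain of the cube `{0,1}^m`, whose size Sperner's theorem bounds by `C(m, ⌊m/2⌋)`.
-/

open Finset Function

namespace Monotone

variable {α : Type*} [PartialOrder α] {f : α → α}

theorem apply_eq_of_le_apply_of_isPeriodicPt (hf : Monotone f) {x : α} {n : ℕ}
    (hx : IsPeriodicPt f n x) (hn : 0 < n) (hle : x ≤ f x) : f x = x :=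
  le_antisymm (by simpa [hx.eq] using hf.monotone_iterate_of_le_map hle hn) hle

theorem isAntichain_range_iterate (hf : Monotone f) {x : α} {n : ℕ}
    (hx : IsPeriodicPt f n x) (hn : 0 < n) :
    IsAntichain (· ≤ ·) (Set.range fun i => f^[i] x) := by
  rintro _ ⟨i, rfl⟩ _ ⟨j, rfl⟩ hne hle
  dsimp only at hne hle
  -- `f^[j] x` is reached from `f^[i] x` by `d` more steps, since `f^[n * i] x = x`.
  set d := j + (n - 1) * i
  have hd : d + i = j + n * i := by
    rw [add_assoc, ← Nat.succ_mul, Nat.succ_eq_add_one, Nat.sub_add_cancel hn]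
  have hreach : f^[d] (f^[i] x) = f^[j] x := by
    rw [← iterate_add_apply, hd, iterate_add_apply, (hx.mul_const i).eq]
  rw [← hreach] at hne hle
  exact hne ((hf.iterate d).apply_eq_of_le_apply_of_isPeriodicPt
    ((hx.apply_iterate i).iterate d) hn hle).symm

end Monotone

def Pi.boolSupportEmbedding (ι : Type*) [Fintype ι] : (ι → Bool) ↪o Finset ι :=
  OrderEmbedding.ofMapLEIff (fun u => univ.filter (u · = true)) fun u v => by
    simp only [Finset.subset_iff, mem_filter, mem_univ, true_and,
      Pi.le_def, Bool.le_iff_imp]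

theorem IsAntichain.card_le_choose_of_boolCube {ι : Type*} [Fintype ι] {s : Finset (ι → Bool)}
    (hs : IsAntichain (· ≤ ·) (s : Set (ι → Bool))) :
    #s ≤ (Fintype.card ι).choose (Fintype.card ι / 2) := by
  have hmap : IsAntichain (· ⊆ ·) ((s.map (Pi.boolSupportEmbedding ι).toEmbedding : Finset _) :
      Set (Finset ι)) := by
    simpa using hs.image_embedding (Pi.boolSupportEmbedding ι)
  simpa using hmap.sperner

/-- Sperner bound: the length of any simple cycle of a monotone self-map of the
boolean cube `{0,1}^m` is at most `C(m, ⌊m/2⌋)`. -/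
theorem cycle_length_le_central_binom (m k : ℕ)
    (f : (Fin m → Bool) → (Fin m → Bool)) (hf : Monotone f)
    (w : Fin m → Bool) (hcyc : f^[k] w = w)
    (hdist : ∀ i j : ℕ, i < j → j < k → f^[i] w ≠ f^[j] w) :
    k ≤ Nat.choose m (m / 2) := by
  rcases Nat.eq_zero_or_pos k with rfl | hk
  · exact Nat.zero_le _
  have hinj : Set.InjOn (fun i => f^[i] w) (range k) := by
    intro i hi j hj hij
    by_contra hne
    rcases Nat.lt_or_gt_of_ne hne with h | h
    · exact hdist i j h (by simpa using hj) hij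
    · exact hdist j i h (by simpa using hi) hij.symm
  have hanti : IsAntichain (· ≤ ·) (((range k).image fun i => f^[i] w : Finset _) :
      Set (Fin m → Bool)) :=
    (hf.isAntichain_range_iterate hcyc hk).subset (by simp [Set.image_subset_iff])
  simpa [card_image_of_injOn hinj] using hanti.card_le_choose_of_boolCube
end

section
/- For every m : ℕ there exist a monotone function f : (Fin m → Bool) → (Fin m → Bool) and a point w : Fin m → Bool such that the iterates w, f(w), …, f^{k-1}(w) are pairwise distinct, where k = Nat.choose m (m / 2). Consequently the repetition number of f (the largest number of pairwise distinct consecutive iterates from some starting point) is at least C(m, ⌊m/2⌋). -/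
open Finset

private def wt {m : ℕ} (v : Fin m → Bool) : ℕ := (univ.filter (fun i => v i = true)).card

private lemma wt_mono {m : ℕ} {u v : Fin m → Bool} (h : u ≤ v) : wt u ≤ wt v := by
  apply card_le_card
  intro i hi
  simp only [mem_filter, mem_univ, true_and] at *
  exact Bool.le_iff_imp.mp (h i) hi

private lemma wt_antichain {m : ℕ} {u v : Fin m → Bool} (h : u ≤ v) (hw : wt u = wt v) :
    u = v := by
  have hsub : univ.filter (fun i => u i = true) ⊆ univ.filter (fun i => v i = true) := by
    intro i hi
    simp only [mem_filter, mem_univ, true_and] at *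
    exact Bool.le_iff_imp.mp (h i) hi
  have heq := Finset.eq_of_subset_of_card_le hsub (le_of_eq hw.symm)
  funext i
  have h2 : (u i = true) ↔ (v i = true) := by simpa using Finset.ext_iff.mp heq i
  cases hu : u i <;> cases hv : v i <;> simp_all

private def midEquiv (m : ℕ) :
    {v : Fin m → Bool // wt v = m / 2} ≃ {s : Finset (Fin m) // s.card = m / 2} where
  toFun v := ⟨univ.filter (fun i => v.1 i = true), v.2⟩
  invFun s := ⟨fun i => decide (i ∈ s.1), by simpa [wt] using s.2⟩
  left_inv v := by ext i; simp
  right_inv s := by ext i; simp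

private lemma card_mid (m : ℕ) :
    Fintype.card {v : Fin m → Bool // wt v = m / 2} = Nat.choose m (m / 2) := by
  rw [Fintype.card_congr (midEquiv m), Fintype.card_finset_len, Fintype.card_fin]

/-- Aracena's construction: for every `m` there is a monotone self-map of the boolean cube
`{0,1}^m` whose repetition number is at least `C(m, ⌊m/2⌋)`: some starting point has
`C(m, ⌊m/2⌋)` pairwise distinct consecutive iterates. -/
theorem exists_monotone_with_large_repetition_number (m : ℕ) :
    ∃ (f : (Fin m → Bool) → (Fin m → Bool)) (w : Fin m → Bool),
      Monotone f ∧
      ∀ i j : ℕ, i < j → j < Nat.choose m (m / 2) → f^[i] w ≠ f^[j] w := by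
  set K := Nat.choose m (m / 2) with hK
  have hKpos : 0 < K := Nat.choose_pos (Nat.div_le_self m 2)
  haveI : NeZero K := ⟨hKpos.ne'⟩
  obtain ⟨e⟩ : Nonempty ({v : Fin m → Bool // wt v = m / 2} ≃ Fin K) := by
    apply Fintype.card_eq.mp
    rw [card_mid, Fintype.card_fin]
  set f : (Fin m → Bool) → (Fin m → Bool) := fun v =>
    if h : wt v = m / 2 then (e.symm (e ⟨v, h⟩ + 1)).1
    else if wt v < m / 2 then (fun _ => false) else (fun _ => true) with hf
  refine ⟨f, (e.symm ⟨0, hKpos⟩).1, ?_, ?_⟩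
  · intro u v huv
    rcases lt_trichotomy (wt u) (m / 2) with hu | hu | hu
    · simp only [hf, dif_neg hu.ne, if_pos hu]
      intro i; exact Bool.false_le _
    · have hv := hu ▸ wt_mono huv
      rcases eq_or_lt_of_le hv with hv | hv
      · have : u = v := wt_antichain huv (hu.trans hv)
        rw [this]
      · simp only [hf, dif_neg hv.ne', if_neg (not_lt.mpr hv.le)]
        intro i; exact Bool.le_true _
    · have hv := hu.trans_le (wt_mono huv)
      simp only [hf, dif_neg hu.ne', dif_neg hv.ne', if_neg (not_lt.mpr hu.le),
        if_neg (not_lt.mpr hv.le)]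
      exact le_refl _
  · have key : ∀ n : ℕ, ∀ hn : n < K, f^[n] (e.symm ⟨0, hKpos⟩).1 = (e.symm ⟨n, hn⟩).1 := by
      intro n
      induction n with
      | zero => intro hn; simp
      | succ n ih =>
        intro hn
        have hn' : n < K := Nat.lt_of_succ_lt hn
        rw [Function.iterate_succ_apply', ih hn']
        have hw : wt (e.symm ⟨n, hn'⟩).1 = m / 2 := (e.symm ⟨n, hn'⟩).2
        simp only [hf, dif_pos hw]
        congr 1
        have : (⟨(e.symm ⟨n, hn'⟩).1, hw⟩ : {v : Fin m → Bool // wt v = m / 2})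
            = e.symm ⟨n, hn'⟩ := rfl
        rw [this, Equiv.apply_symm_apply]
        congr 1
        ext
        simp [Fin.add_def, Nat.mod_eq_of_lt hn]
    intro i j hij hjK
    have hiK : i < K := hij.trans hjK
    rw [key i hiK, key j hjK]
    intro hcontra
    have : (⟨i, hiK⟩ : Fin K) = ⟨j, hjK⟩ := by
      apply e.symm.injective
      exact Subtype.ext hcontra
    exact hij.ne (Fin.mk.injEq .. ▸ this)
end

section
/- There exists a payoff set C ⊆ (ℕ → Bool) that is closed under tail equivalence (if ρ ∈ C and ρ' is tail-equivalent to ρ then ρ' ∈ C), such that the alternating binary game with payoff C is undetermined: for every Player 1 strategy σ : List Bool → Bool there exists a Player 2 strategy τ with play σ τ ∉ C, and for every Player 2 strategy τ there exists a Player 1 strategy σ with play σ τ ∈ C. -/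
/-- The history of the alternating binary game after `n` moves: Player 1 moves
(according to `σ`) at even positions, Player 2 (according to `τ`) at odd positions. -/
def hist (σ τ : List Bool → Bool) : ℕ → List Bool
  | 0 => []
  | n + 1 =>
      hist σ τ n ++ [if n % 2 = 0 then σ (hist σ τ n) else τ (hist σ τ n)]

/-- The play induced by the strategies `σ` (Player 1, even positions) and
`τ` (Player 2, odd positions) in the alternating binary game. -/
def play (σ τ : List Bool → Bool) (n : ℕ) : Bool :=
  if n % 2 = 0 then σ (hist σ τ n) else τ (hist σ τ n)

namespace Undet
open Cardinal Set

abbrev T := ℕ → Bool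
abbrev S := List Bool → Bool

/-- Tail-equivalence. -/
def E (p q : T) : Prop := ∃ n m : ℕ, ∀ k, p (n + k) = q (m + k)

lemma E.refl (p : T) : E p p := ⟨0, 0, fun _ => rfl⟩

lemma E.symm {p q : T} (h : E p q) : E q p := by
  obtain ⟨n, m, h⟩ := h; exact ⟨m, n, fun k => (h k).symm⟩

lemma E.trans {p q r : T} (h1 : E p q) (h2 : E q r) : E p r := by
  obtain ⟨n, m, h1⟩ := h1
  obtain ⟨n', m', h2⟩ := h2
  rcases le_or_gt n' m with h | h
  · refine ⟨n, m' + (m - n'), fun k => ?_⟩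
    have e1 := h1 k
    have e2 := h2 ((m - n') + k)
    have c1 : n' + (m - n' + k) = m + k := by omega
    have c2 : m' + (m - n' + k) = m' + (m - n') + k := by omega
    rw [c1, c2] at e2
    rw [e1, e2]
  · refine ⟨n + (n' - m), m', fun k => ?_⟩
    have e1 := h1 ((n' - m) + k)
    have e2 := h2 k
    have c1 : n + (n' - m + k) = n + (n' - m) + k := by omega
    have c2 : m + (n' - m + k) = n' + k := by omega
    rw [c1, c2] at e1
    rw [e1, e2]

/-- Tail-equivalence class of `q`. -/
def cls (q : T) : Set T := {p | E p q}

lemma cls_countable (q : T) : (cls q).Countable := by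
  have : cls q ⊆ ⋃ (n : ℕ) (m : ℕ), {p : T | ∀ k, p (n + k) = q (m + k)} := by
    rintro p ⟨n, m, h⟩
    exact mem_iUnion.2 ⟨n, mem_iUnion.2 ⟨m, h⟩⟩
  refine Set.Countable.mono this ?_
  refine Set.countable_iUnion fun n => Set.countable_iUnion fun m => ?_
  have : Set.InjOn (fun p : T => (fun i : Fin n => p i)) {p : T | ∀ k, p (n + k) = q (m + k)} := by
    intro p hp p' hp' hpq
    funext i
    rcases lt_or_ge i n with hi | hi
    · exact congrFun hpq ⟨i, hi⟩
    · have e1 := hp (i - n)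
      have e2 := hp' (i - n)
      rw [Nat.add_sub_cancel' hi] at e1 e2
      rw [e1, e2]
  refine Set.Finite.countable (Set.Finite.of_finite_image ?_ this)
  exact Set.toFinite _

lemma hist_length (σ τ : S) (n : ℕ) : (hist σ τ n).length = n := by
  induction n with
  | zero => rfl
  | succ n ih => simp [hist, ih]

/-- Player 2 strategy that plays `f k` at odd move `2k+1`, ignoring history content. -/
def tauOf (f : T) : S := fun h => f (h.length / 2)

lemma play_tauOf_odd (σ : S) (f : T) (k : ℕ) : play σ (tauOf f) (2 * k + 1) = f k := by
  have h2 : (2 * k + 1) % 2 = 1 := by omega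
  simp only [play, h2]
  simp [tauOf, hist_length, Nat.mul_add_div]

/-- Player 1 strategy that plays `f k` at even move `2k`. -/
def sigmaOf (f : T) : S := fun h => f (h.length / 2)

lemma play_sigmaOf_even (τ : S) (f : T) (k : ℕ) : play (sigmaOf f) τ (2 * k) = f k := by
  have h2 : (2 * k) % 2 = 0 := by omega
  simp only [play, h2]
  simp [sigmaOf, hist_length]

lemma mk_T : #T = Cardinal.continuum := by
  rw [show (T : Type) = (ℕ → Bool) from rfl]
  rw [Cardinal.mk_arrow]
  simp [Cardinal.mk_bool, Cardinal.two_power_aleph0]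

lemma mk_S : #S = Cardinal.continuum := by
  rw [show (S : Type) = (List Bool → Bool) from rfl]
  rw [Cardinal.mk_arrow]
  simp [Cardinal.mk_bool, Cardinal.mk_list_eq_aleph0, Cardinal.two_power_aleph0]

/-- The tail-closure of a small set is small. -/
lemma mk_closure_lt {X : Set T} (hX : #X < Cardinal.continuum) :
    #(⋃ x ∈ X, cls x) < Cardinal.continuum := by
  calc #(⋃ x ∈ X, cls x) ≤ #X * ⨆ x : X, #(cls (x : T)) := Cardinal.mk_biUnion_le _ _
    _ ≤ #X * ℵ₀ := by
        refine mul_le_mul_right ?_ _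
        exact ciSup_le' fun x => (Cardinal.mk_le_aleph0_iff.2 (cls_countable _))
    _ ≤ max (max #X ℵ₀) ℵ₀ := Cardinal.mul_le_max _ _
    _ < Cardinal.continuum := by
        refine max_lt (max_lt hX Cardinal.aleph0_lt_continuum) Cardinal.aleph0_lt_continuum

lemma escape_tau (X : Set T) (hX : #X < Cardinal.continuum) (σ : S) :
    ∃ τ : S, ∀ x ∈ X, ¬ E (play σ τ) x := by
  by_contra hcon
  push_neg at hcon
  have hsub : Set.range (fun f : T => play σ (tauOf f)) ⊆ ⋃ x ∈ X, cls x := by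
    rintro _ ⟨f, rfl⟩
    obtain ⟨x, hx, hE⟩ := hcon (tauOf f)
    exact Set.mem_biUnion hx hE
  have hinj : Function.Injective (fun f : T => play σ (tauOf f)) := by
    intro f g hfg
    funext k
    have := congrFun hfg (2 * k + 1)
    simp only at this
    rwa [play_tauOf_odd, play_tauOf_odd] at this
  have : (Cardinal.continuum : Cardinal) ≤ #(⋃ x ∈ X, cls x) := by
    calc Cardinal.continuum = #T := mk_T.symm
      _ = #(Set.range fun f : T => play σ (tauOf f)) := (Cardinal.mk_range_eq _ hinj).symm
      _ ≤ _ := Cardinal.mk_le_mk_of_subset hsub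
  exact absurd (mk_closure_lt hX) (not_lt.2 this)

lemma escape_sigma (X : Set T) (hX : #X < Cardinal.continuum) (τ : S) :
    ∃ σ : S, ∀ x ∈ X, ¬ E (play σ τ) x := by
  by_contra hcon
  push_neg at hcon
  have hsub : Set.range (fun f : T => play (sigmaOf f) τ) ⊆ ⋃ x ∈ X, cls x := by
    rintro _ ⟨f, rfl⟩
    obtain ⟨x, hx, hE⟩ := hcon (sigmaOf f)
    exact Set.mem_biUnion hx hE
  have hinj : Function.Injective (fun f : T => play (sigmaOf f) τ) := by
    intro f g hfg
    funext k
    have := congrFun hfg (2 * k)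
    simp only at this
    rwa [play_sigmaOf_even, play_sigmaOf_even] at this
  have : (Cardinal.continuum : Cardinal) ≤ #(⋃ x ∈ X, cls x) := by
    calc Cardinal.continuum = #T := mk_T.symm
      _ = #(Set.range fun f : T => play (sigmaOf f) τ) := (Cardinal.mk_range_eq _ hinj).symm
      _ ≤ _ := Cardinal.mk_le_mk_of_subset hsub
  exact absurd (mk_closure_lt hX) (not_lt.2 this)

lemma exist_pair (X : Set T) (hX : #X < Cardinal.continuum) (σ τ : S) :
    ∃ ab : T × T, (∃ σ', ab.1 = play σ' τ) ∧ (∃ τ', ab.2 = play σ τ') ∧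
      (∀ x ∈ X, ¬ E ab.1 x) ∧ (∀ x ∈ X, ¬ E ab.2 x) ∧ ¬ E ab.1 ab.2 := by
  obtain ⟨τ', hb⟩ := escape_tau X hX σ
  have hX' : #(insert (play σ τ') X : Set T) < Cardinal.continuum := by
    calc #(insert (play σ τ') X : Set T) ≤ #X + 1 := Cardinal.mk_insert_le
      _ < Cardinal.continuum :=
          Cardinal.add_lt_of_lt Cardinal.aleph0_le_continuum hX
            (lt_of_lt_of_le Cardinal.one_lt_aleph0 Cardinal.aleph0_le_continuum)
  obtain ⟨σ', ha⟩ := escape_sigma _ hX' τ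
  refine ⟨(play σ' τ, play σ τ'), ⟨σ', rfl⟩, ⟨τ', rfl⟩, ?_, ?_, ?_⟩
  · intro x hx
    exact ha x (Set.mem_insert_of_mem _ hx)
  · intro x hx
    exact hb x hx
  · exact ha _ (Set.mem_insert _ _)

abbrev I : Type := (Cardinal.continuum.ord).ToType

noncomputable def eS : I ≃ S :=
  Classical.choice (Cardinal.eq.mp (by rw [Cardinal.mk_ord_toType, mk_S]))

def Xof (α : I) (rec : ∀ β : I, β < α → T × T) : Set T :=
  (Set.range fun β : Set.Iio α => (rec β β.2).1) ∪
  (Set.range fun β : Set.Iio α => (rec β β.2).2)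

lemma Xof_lt (α : I) (rec : ∀ β : I, β < α → T × T) :
    #(Xof α rec) < Cardinal.continuum := by
  have h1 : #(Set.Iio α) < Cardinal.continuum := Cardinal.mk_Iio_ord_toType α
  calc #(Xof α rec) ≤ #(Set.range fun β : Set.Iio α => (rec β β.2).1)
        + #(Set.range fun β : Set.Iio α => (rec β β.2).2) := Cardinal.mk_union_le _ _
    _ ≤ #(Set.Iio α) + #(Set.Iio α) := add_le_add Cardinal.mk_range_le Cardinal.mk_range_le
    _ < Cardinal.continuum :=
        Cardinal.add_lt_of_lt Cardinal.aleph0_le_continuum h1 h1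

noncomputable def recF : ∀ α : I, (∀ β : I, β < α → T × T) → T × T := fun α rec =>
  Classical.choose (exist_pair (Xof α rec) (Xof_lt α rec) (eS α) (eS α))

noncomputable def g : I → T × T := (IsWellFounded.wf (r := ((· < ·) : I → I → Prop))).fix recF

lemma g_eq (α : I) : g α = recF α (fun β _ => g β) :=
  WellFounded.fix_eq _ recF α

lemma g_spec (α : I) :
    (∃ σ', (g α).1 = play σ' (eS α)) ∧ (∃ τ', (g α).2 = play (eS α) τ') ∧
      (∀ x ∈ Xof α (fun β _ => g β), ¬ E (g α).1 x) ∧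
      (∀ x ∈ Xof α (fun β _ => g β), ¬ E (g α).2 x) ∧ ¬ E (g α).1 (g α).2 := by
  rw [g_eq α]
  exact Classical.choose_spec
    (exist_pair (Xof α (fun β _ => g β)) (Xof_lt α (fun β _ => g β)) (eS α) (eS α))

lemma not_E_ab (α β : I) : ¬ E (g α).1 (g β).2 := by
  rcases lt_trichotomy β α with h | h | h
  · refine (g_spec α).2.2.1 _ ?_
    exact Or.inr ⟨⟨β, h⟩, rfl⟩
  · rw [h]; exact (g_spec α).2.2.2.2
  · intro hE
    refine (g_spec β).2.2.2.1 _ (Or.inl ⟨⟨α, h⟩, rfl⟩) hE.symm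

end Undet

/-- There is a payoff set closed under tail equivalence (i.e. a prefix-independent
winning condition) for which the alternating binary game is undetermined. -/
theorem exists_undetermined_tail_invariant_game :
    ∃ C : Set (ℕ → Bool),
      (∀ ρ ∈ C, ∀ ρ' : ℕ → Bool,
        (∃ n m : ℕ, ∀ k : ℕ, ρ' (n + k) = ρ (m + k)) → ρ' ∈ C) ∧
      (∀ σ : List Bool → Bool, ∃ τ : List Bool → Bool, play σ τ ∉ C) ∧
      (∀ τ : List Bool → Bool, ∃ σ : List Bool → Bool, play σ τ ∈ C) := by
  classical
  refine ⟨{p | ∃ α : Undet.I, Undet.E p ((Undet.g α).1)}, ?_, ?_, ?_⟩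
  · rintro ρ ⟨α, hα⟩ ρ' hE
    exact ⟨α, Undet.E.trans hE hα⟩
  · intro σ
    obtain ⟨τ', hτ'⟩ := (Undet.g_spec (Undet.eS.symm σ)).2.1
    rw [Equiv.apply_symm_apply] at hτ'
    refine ⟨τ', ?_⟩
    rintro ⟨β, hβ⟩
    rw [← hτ'] at hβ
    exact Undet.not_E_ab β (Undet.eS.symm σ) hβ.symm
  · intro τ
    obtain ⟨σ', hσ'⟩ := (Undet.g_spec (Undet.eS.symm τ)).1
    rw [Equiv.apply_symm_apply] at hσ'
    exact ⟨σ', ⟨Undet.eS.symm τ, hσ' ▸ Undet.E.refl _⟩⟩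
end
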